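/- arXiv:1907.13254 — 3 statements merged into one kernel-verified Lean document; each statement's English description precedes it below -/
import Mathlib

section
/- For n = 2, let σ = δ^{11}, t = −x_{21}x_{22} + x_{11}(x_{21}+x_{22}) − x_{11}² ∈ Λ, and let Γ̃ = ℂ[x_{11}, x_{21}+x_{22}, x_{21}x_{22}, x_{21}−x_{22}] ⊆ Λ. Then the generalized Weyl algebra relations hold in End_ℂ(L): for every d ∈ Γ̃, X_1⁺ ∘ m_d = m_{σ(d)} ∘ X_1⁺ and X_1⁻ ∘ m_d = m_{σ^{-1}(d)} ∘ X_1⁻; moreover X_1⁻ ∘ X_1⁺ = m_t and X_1⁺ ∘ X_1⁻ = m_{σ(t)}. -/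
open scoped BigOperators
open MvPolynomial

noncomputable section

/-- The polynomial ring `Λ = ℂ[x_{ki}]` (variables indexed by pairs `(k, i)`). -/
abbrev Lam : Type := MvPolynomial (ℕ × ℕ) ℂ

/-- `L`, the field of fractions of `Λ`. -/
abbrev L : Type := FractionRing Lam

/-- The variable `x_{ki}` as an element of `L`. -/
def x (k i : ℕ) : L := algebraMap Lam L (X (k, i))

/-- The algebra automorphism of `Λ` sending `x_v ↦ x_v - 1` and fixing the other variables. -/
def shiftEquiv (v : ℕ × ℕ) : Lam ≃ₐ[ℂ] Lam :=
  AlgEquiv.ofAlgHom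
    (aeval (fun w => if w = v then X w - 1 else X w))
    (aeval (fun w => if w = v then X w + 1 else X w))
    (by apply MvPolynomial.algHom_ext; intro w; by_cases h : w = v <;> simp [h])
    (by apply MvPolynomial.algHom_ext; intro w; by_cases h : w = v <;> simp [h])

/-- The automorphism `δ^{ki}` of `L`, determined by `δ^{ki}(x_{ℓj}) = x_{ℓj} - δ_{ℓk}δ_{ij}`. -/
def δ (k i : ℕ) : L ≃ₐ[ℂ] L := IsFractionRing.algEquivOfAlgEquiv (shiftEquiv (k, i))

/-- Multiplication by `a ∈ L` as a `ℂ`-linear endomorphism `m_a` of `L`. -/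
def mulOp (a : L) : Module.End ℂ L := LinearMap.mulLeft ℂ a

/-- A field automorphism of `L` as a `ℂ`-linear endomorphism of `L`. -/
def lin (e : L ≃ₐ[ℂ] L) : Module.End ℂ L := e.toLinearMap

/-- The rational function `a_{ki}^+`. -/
def aP (k i : ℕ) : L :=
  -((∏ j ∈ Finset.Icc 1 (k + 1), (x (k + 1) j - x k i)) /
    ∏ j ∈ (Finset.Icc 1 k).erase i, (x k j - x k i))

/-- The rational function `a_{ki}^-`. -/
def aM (k i : ℕ) : L :=
  (∏ j ∈ Finset.Icc 1 (k - 1), (x (k - 1) j - x k i)) /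
    ∏ j ∈ (Finset.Icc 1 k).erase i, (x k j - x k i)

/-- The operator `A_{ki}^+ = δ^{ki} ∘ m_{a_{ki}^+}`. -/
def Ap (k i : ℕ) : Module.End ℂ L := lin (δ k i) * mulOp (aP k i)

/-- The operator `A_{ki}^- = (δ^{ki})^{-1} ∘ m_{a_{ki}^-}`. -/
def Am (k i : ℕ) : Module.End ℂ L := lin (δ k i).symm * mulOp (aM k i)

/-- The operator `X_k^+ = ∑_{i=1}^k A_{ki}^+`. -/
def Xp (k : ℕ) : Module.End ℂ L := ∑ i ∈ Finset.Icc 1 k, Ap k i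

/-- The operator `X_k^- = ∑_{i=1}^k A_{ki}^-`. -/
def Xm (k : ℕ) : Module.End ℂ L := ∑ i ∈ Finset.Icc 1 k, Am k i

/-- The operator `X_{kk}`. -/
def Xd (k : ℕ) : Module.End ℂ L :=
  mulOp ((∑ j ∈ Finset.Icc 1 k, (x k j + (j : L) - 1)) -
    ∑ i ∈ Finset.Icc 1 (k - 1), (x (k - 1) i + (i : L) - 1))

/-- The Vandermonde polynomial `∏_{1 ≤ i < j ≤ k} (x_{ki} - x_{kj})`, as an element of `L`. -/
def vand (k : ℕ) : L :=
  ∏ p ∈ (Finset.Icc 1 k ×ˢ Finset.Icc 1 k).filter (fun p => p.1 < p.2),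
    (x k p.1 - x k p.2)

/-- The operator `𝒱_k = m_{∏_{i<j}(x_{ki} - x_{kj})}`. -/
def Vop (k : ℕ) : Module.End ℂ L := mulOp (vand k)

/-- The generating set of `U_n`: the `X_k^±` for `1 ≤ k ≤ n-1` and the `X_{kk}` for `1 ≤ k ≤ n`. -/
def Ugens (n : ℕ) : Set (Module.End ℂ L) :=
  {u | ∃ k, 1 ≤ k ∧ k + 1 ≤ n ∧ (u = Xp k ∨ u = Xm k)} ∪
    {u | ∃ k, 1 ≤ k ∧ k ≤ n ∧ u = Xd k}

/-- `U_n`, the Gelfand–Tsetlin realization of `U(gl_n)` inside `End_ℂ(L)`. -/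
def Ualg (n : ℕ) : Subalgebra ℂ (Module.End ℂ L) := Algebra.adjoin ℂ (Ugens n)

/-- `𝒜(gl_n)`, the subalgebra generated by `U_n` together with `𝒱_2, …, 𝒱_n`. -/
def Agl (n : ℕ) : Subalgebra ℂ (Module.End ℂ L) :=
  Algebra.adjoin ℂ (Ugens n ∪ {u | ∃ k, 2 ≤ k ∧ k ≤ n ∧ u = Vop k})

/-- `Γ̃ = ℂ[x_{11}, x_{21}+x_{22}, x_{21}x_{22}, x_{21}−x_{22}]` (inside `L`). -/
def GammaTilde2 : Subalgebra ℂ L :=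
  Algebra.adjoin ℂ ({x 1 1, x 2 1 + x 2 2, x 2 1 * x 2 2, x 2 1 - x 2 2} : Set L)

/-! For `n = 2` the empty products make `a₁₁⁻ = 1` and `a₁₁⁺ = t`, so `X₁⁻ = σ⁻¹` and
`X₁⁺ = σ ∘ m_t`. Every relation then follows from `σ ∘ m_d = m_{σ d} ∘ σ`, which holds for
all `d ∈ L` because `σ` is multiplicative. -/

section Twisted

variable (e : L ≃ₐ[ℂ] L) (a d : L)

lemma mulOp_mul_mulOp : mulOp a * mulOp d = mulOp (a * d) := by
  ext v
  simp [mulOp]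

lemma mulOp_one : mulOp 1 = 1 := by
  ext v
  simp [mulOp]

lemma lin_mul_mulOp : lin e * mulOp a = mulOp (e a) * lin e := by
  ext v
  exact map_mul e a v

lemma lin_symm_mul_lin : lin e.symm * lin e = 1 := by
  ext v
  exact e.symm_apply_apply v

lemma lin_mul_lin_symm : lin e * lin e.symm = 1 := by
  ext v
  exact e.apply_symm_apply v

lemma lin_mul_mulOp_mul_mulOp :
    lin e * mulOp a * mulOp d = mulOp (e d) * (lin e * mulOp a) := by
  rw [mul_assoc, mulOp_mul_mulOp, mul_comm, ← mulOp_mul_mulOp, ← mul_assoc, lin_mul_mulOp,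
    mul_assoc]

lemma lin_symm_mul_lin_mul_mulOp : lin e.symm * (lin e * mulOp a) = mulOp a := by
  rw [← mul_assoc, lin_symm_mul_lin, one_mul]

lemma lin_mul_mulOp_mul_lin_symm : lin e * mulOp a * lin e.symm = mulOp (e a) := by
  rw [lin_mul_mulOp, mul_assoc, lin_mul_lin_symm, mul_one]

end Twisted

lemma aP_one_one : aP 1 1 = -(x 2 1 * x 2 2) + x 1 1 * (x 2 1 + x 2 2) - x 1 1 ^ 2 := by
  have h : Finset.Icc 1 2 = ({1, 2} : Finset ℕ) := by decide
  simp [aP, h]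
  ring

lemma Xp_one : Xp 1 = lin (δ 1 1) * mulOp (aP 1 1) := by
  rw [Xp, Finset.Icc_self, Finset.sum_singleton, Ap]

lemma Xm_one : Xm 1 = lin (δ 1 1).symm := by
  simp [Xm, Am, aM, mulOp_one]

/-- `𝒜(gl_2)` satisfies the generalized Weyl algebra relations with
`σ = δ^{11}` and `t = −x_{21}x_{22} + x_{11}(x_{21}+x_{22}) − x_{11}²`. -/
theorem Agl2_GWA_relations :
    (∀ d ∈ GammaTilde2, Xp 1 * mulOp d = mulOp (δ 1 1 d) * Xp 1) ∧
    (∀ d ∈ GammaTilde2, Xm 1 * mulOp d = mulOp ((δ 1 1).symm d) * Xm 1) ∧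
    Xm 1 * Xp 1 = mulOp (-(x 2 1 * x 2 2) + x 1 1 * (x 2 1 + x 2 2) - x 1 1 ^ 2) ∧
    Xp 1 * Xm 1 = mulOp (δ 1 1 (-(x 2 1 * x 2 2) + x 1 1 * (x 2 1 + x 2 2) - x 1 1 ^ 2)) := by
  rw [Xp_one, Xm_one, ← aP_one_one]
  exact ⟨fun d _ => lin_mul_mulOp_mul_mulOp _ _ d, fun d _ => lin_mul_mulOp _ d,
    lin_symm_mul_lin_mul_mulOp _ _, lin_mul_mulOp_mul_lin_symm _ _⟩
end
end

section
/- For n = 3, the operators A_{21}^± and A_{22}^∓ with opposite superscripts commute: [A_{21}⁺, A_{22}⁻] = 0 and [A_{21}⁻, A_{22}⁺] = 0 in End_ℂ(L). -/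
open scoped BigOperators
open MvPolynomial

noncomputable section

/-! The shifts `δ^{21}` and `(δ^{22})⁻¹` commute, so `δ^{21} m_a (δ^{22})⁻¹ m_b` and
`(δ^{22})⁻¹ m_b δ^{21} m_a` agree as soon as
`δ^{21}(a) · δ^{21}(δ^{22})⁻¹(b) = (δ^{22})⁻¹(b) · (δ^{22})⁻¹δ^{21}(a)`.
For `a = a_{21}^+`, `b = a_{22}^-` both sides are `-P(x_{21} - 1)(x_{11} - x_{22} - 1)` divided by
`(x_{22} - x_{21} + 1)(x_{21} - x_{22} - 2)` resp. `(x_{21} - x_{22} - 1)(x_{22} - x_{21} + 2)`,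
where `P(t) = ∏_j (x_{3j} - t)`. These denominators are the same polynomial, so the identity
holds without knowing that they are nonzero. The pair `A_{21}^-`, `A_{22}^+` is symmetric. -/

theorem shiftEquiv_X (v w : ℕ × ℕ) :
    shiftEquiv v (X w) = if w = v then X w - 1 else X w := by
  simp [shiftEquiv]

theorem shiftEquiv_symm_X (v w : ℕ × ℕ) :
    (shiftEquiv v).symm (X w) = if w = v then X w + 1 else X w := by
  simp [shiftEquiv, AlgEquiv.ofAlgHom_symm]

theorem shiftEquiv_commute (v w : ℕ × ℕ) : Commute (shiftEquiv v) (shiftEquiv w) := by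
  refine AlgEquiv.coe_toAlgHom_injective (MvPolynomial.algHom_ext fun u => ?_)
  simp only [AlgEquiv.coe_toAlgHom, AlgEquiv.mul_apply, shiftEquiv_X]
  by_cases hv : u = v <;> by_cases hw : u = w <;> subst_vars <;> simp [shiftEquiv_X, *]

theorem IsFractionRing.algEquivOfAlgEquiv_commute {R A K : Type*} [CommSemiring R] [CommRing A]
    [Field K] [Algebra R A] [Algebra R K] [Algebra A K] [IsFractionRing A K]
    [IsScalarTower R A K] {e f : A ≃ₐ[R] A} (h : Commute e f) :
    Commute (algEquivOfAlgEquiv e : K ≃ₐ[R] K) (algEquivOfAlgEquiv f) := by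
  ext z
  obtain ⟨p, q, -, rfl⟩ := IsFractionRing.div_surjective (A := A) z
  have hef (a : A) : e (f a) = f (e a) := congr($(h.eq) a)
  simp [hef]

theorem δ_commute (k i l j : ℕ) : Commute (δ k i) (δ l j) :=
  IsFractionRing.algEquivOfAlgEquiv_commute (shiftEquiv_commute _ _)

theorem δ_x (k i l j : ℕ) :
    δ k i (x l j) = x l j - if (l, j) = (k, i) then 1 else 0 := by
  simp only [δ, x, IsFractionRing.algEquivOfAlgEquiv_algebraMap, shiftEquiv_X]
  split <;> simp

theorem δ_symm_x (k i l j : ℕ) :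
    (δ k i).symm (x l j) = x l j + if (l, j) = (k, i) then 1 else 0 := by
  simp only [δ, x, IsFractionRing.algEquivOfAlgEquiv_symm,
    IsFractionRing.algEquivOfAlgEquiv_algebraMap, shiftEquiv_symm_X]
  split <;> simp

theorem AlgEquiv.toLinearMap_mul_mulLeft_commute {R A : Type*} [CommSemiring R] [CommSemiring A]
    [Algebra R A] {σ τ : A ≃ₐ[R] A} (hστ : Commute σ τ) {a b : A}
    (h : σ a * σ (τ b) = τ b * τ (σ a)) :
    Commute (σ.toLinearMap * LinearMap.mulLeft R a) (τ.toLinearMap * LinearMap.mulLeft R b) := by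
  ext f
  have hf : σ (τ f) = τ (σ f) := congr($(hστ.eq) f)
  simp only [Module.End.mul_apply, LinearMap.mulLeft_apply, AlgEquiv.toLinearMap_apply, map_mul]
  rw [← mul_assoc, h, mul_assoc, hf]

theorem aP_two_one :
    aP 2 1 = -((x 3 1 - x 2 1) * ((x 3 2 - x 2 1) * (x 3 3 - x 2 1)) / (x 2 2 - x 2 1)) := by
  rw [aP, show Finset.Icc 1 (2 + 1) = {1, 2, 3} by decide,
    show (Finset.Icc 1 2).erase 1 = {2} by decide,
    Finset.prod_insert (by decide), Finset.prod_insert (by decide),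
    Finset.prod_singleton, Finset.prod_singleton]

theorem aP_two_two :
    aP 2 2 = -((x 3 1 - x 2 2) * ((x 3 2 - x 2 2) * (x 3 3 - x 2 2)) / (x 2 1 - x 2 2)) := by
  rw [aP, show Finset.Icc 1 (2 + 1) = {1, 2, 3} by decide,
    show (Finset.Icc 1 2).erase 2 = {1} by decide,
    Finset.prod_insert (by decide), Finset.prod_insert (by decide),
    Finset.prod_singleton, Finset.prod_singleton]

theorem aM_two_one : aM 2 1 = (x 1 1 - x 2 1) / (x 2 2 - x 2 1) := by
  rw [aM, show Finset.Icc 1 (2 - 1) = {1} by decide, show (Finset.Icc 1 2).erase 1 = {2} by decide,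
    Finset.prod_singleton, Finset.prod_singleton]

theorem aM_two_two : aM 2 2 = (x 1 1 - x 2 2) / (x 2 1 - x 2 2) := by
  rw [aM, show Finset.Icc 1 (2 - 1) = {1} by decide, show (Finset.Icc 1 2).erase 2 = {1} by decide,
    Finset.prod_singleton, Finset.prod_singleton]

theorem Ap_two_one_commute_Am_two_two : Commute (Ap 2 1) (Am 2 2) := by
  refine AlgEquiv.toLinearMap_mul_mulLeft_commute (δ_commute 2 1 2 2).inv_right ?_
  norm_num [aP_two_one, aM_two_two, δ_x, δ_symm_x]
  rw [div_mul_div_comm, div_mul_div_comm]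
  ring

theorem Am_two_one_commute_Ap_two_two : Commute (Am 2 1) (Ap 2 2) := by
  refine AlgEquiv.toLinearMap_mul_mulLeft_commute (δ_commute 2 1 2 2).inv_left ?_
  norm_num [aP_two_two, aM_two_one, δ_x, δ_symm_x]
  rw [div_mul_div_comm, div_mul_div_comm]
  ring

/-- `[A_{21}⁺, A_{22}⁻] = 0` and `[A_{21}⁻, A_{22}⁺] = 0`. -/
theorem A21_A22_opposite_signs_commute :
    Ap 2 1 * Am 2 2 - Am 2 2 * Ap 2 1 = 0 ∧
    Am 2 1 * Ap 2 2 - Ap 2 2 * Am 2 1 = 0 :=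
  ⟨sub_eq_zero_of_eq Ap_two_one_commute_Am_two_two.eq,
    sub_eq_zero_of_eq Am_two_one_commute_Ap_two_two.eq⟩
end
end

section
/- For every integer k ≥ 2, the multiplication operator m_{1/(x−k)} belongs to U_f. -/
/-!
The `a ∈ L` with `m_a ∈ U_f` form a subalgebra containing `ℂ[x]`, and conjugation
`X m_a Y = m_{δ(f a / x)}` maps it to itself. Starting from `a = 1`, this gives
`f(x-1)/(x-1)`, whose pole at `1` survives because `f(0) ≠ 0`. Inductively, from `1/(x-j)` one gets
`f(x-1)/(x-j-1)^n` for every `n` (after clearing the factor `1/(x-1)`). Taking `n` one more than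
the multiplicity of `j+1` as a root of `f(x-1)`, this is `g/(x-j-1)` with `g` coprime to `x-j-1`,
and a Bézout identity `p (x-j-1) + q g = 1` exhibits `1/(x-j-1) = p + q g/(x-j-1)`.
-/

noncomputable section

/-- The polynomial ring `ℂ[x]`. -/
abbrev Pc : Type := Polynomial ℂ

/-- `L = ℂ(x)`, the field of rational functions in one variable. -/
abbrev L1 : Type := FractionRing Pc

/-- The variable `x` as an element of `L`. -/
def x1 : L1 := algebraMap Pc L1 Polynomial.X

/-- The algebra automorphism of `ℂ[x]` with `x ↦ x − 1`. -/
def shift1 : Pc ≃ₐ[ℂ] Pc :=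
  AlgEquiv.ofAlgHom
    (Polynomial.aeval (Polynomial.X - 1))
    (Polynomial.aeval (Polynomial.X + 1))
    (by apply Polynomial.algHom_ext; simp)
    (by apply Polynomial.algHom_ext; simp)

/-- The ℂ-algebra automorphism `δ` of `L = ℂ(x)` with `δ(x) = x − 1`. -/
def δ1 : L1 ≃ₐ[ℂ] L1 := IsFractionRing.algEquivOfAlgEquiv shift1

/-- Multiplication by `a ∈ L` as a ℂ-linear endomorphism `m_a` of `L`. -/
def mul1 (a : L1) : Module.End ℂ L1 := LinearMap.mulLeft ℂ a

/-- The operator `X = δ ∘ m_{f(x)/x}`. -/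
def Xop (f : Pc) : Module.End ℂ L1 :=
  δ1.toLinearMap * mul1 (algebraMap Pc L1 f / x1)

/-- The operator `Y = δ^{-1}`. -/
def Yop : Module.End ℂ L1 := δ1.symm.toLinearMap

/-- `U_f`, the unital ℂ-subalgebra of `End_ℂ(L)` generated by the polynomial
multiplication operators together with `X` and `Y`. -/
def Uf (f : Pc) : Subalgebra ℂ (Module.End ℂ L1) :=
  Algebra.adjoin ℂ
    ({u | ∃ p : Pc, u = mul1 (algebraMap Pc L1 p)} ∪ {Xop f, Yop})

open Polynomial

def multipliers (f : Pc) : Subalgebra ℂ L1 := (Uf f).comap (Algebra.lmul ℂ L1)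

lemma mem_multipliers {f : Pc} {a : L1} : a ∈ multipliers f ↔ mul1 a ∈ Uf f := Iff.rfl

lemma algebraMap_mem_multipliers (f p : Pc) : algebraMap Pc L1 p ∈ multipliers f :=
  Algebra.subset_adjoin (Or.inl ⟨p, rfl⟩)

lemma Xop_mul_mul1_mul_Yop (f : Pc) (a : L1) :
    Xop f * mul1 a * Yop = mul1 (δ1 (algebraMap Pc L1 f / x1 * a)) := by
  ext v
  simp [Xop, Yop, mul1, mul_assoc]

lemma δ1_div_x1_mul_mem_multipliers {f : Pc} {a : L1} (ha : a ∈ multipliers f) :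
    δ1 (algebraMap Pc L1 f / x1 * a) ∈ multipliers f := by
  rw [mem_multipliers, ← Xop_mul_mul1_mul_Yop]
  exact mul_mem (mul_mem (Algebra.subset_adjoin (by simp)) ha) (Algebra.subset_adjoin (by simp))

theorem inv_mem_of_isCoprime {R K S : Type*} [CommRing R] [Field K] [Algebra R K] [SetLike S K]
    [SubringClass S K] {s : S} (hR : ∀ r, algebraMap R K r ∈ s) {p g : R} (hpg : IsCoprime p g)
    (hp : algebraMap R K p ≠ 0) (h : algebraMap R K g / algebraMap R K p ∈ s) :
    (algebraMap R K p)⁻¹ ∈ s := by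
  obtain ⟨a, b, hab⟩ := hpg
  have hab' : algebraMap R K a * algebraMap R K p + algebraMap R K b * algebraMap R K g = 1 := by
    rw [← map_mul, ← map_mul, ← map_add, hab, map_one]
  have hinv : (algebraMap R K p)⁻¹ =
      algebraMap R K a + algebraMap R K b * (algebraMap R K g / algebraMap R K p) := by
    field_simp
    linear_combination -hab'
  rw [hinv]
  exact add_mem (hR a) (mul_mem (hR b) h)

theorem inv_X_sub_C_mem_of_div_pow_rootMultiplicity_succ_mem {𝕜 K S : Type*} [Field 𝕜] [Field K]
    [Algebra 𝕜[X] K] [FaithfulSMul 𝕜[X] K] [SetLike S K] [SubringClass S K] {s : S}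
    (hR : ∀ p, algebraMap 𝕜[X] K p ∈ s) {u : 𝕜[X]} (hu : u ≠ 0) (c : 𝕜)
    (h : algebraMap 𝕜[X] K u / algebraMap 𝕜[X] K (X - C c) ^ (u.rootMultiplicity c + 1) ∈ s) :
    (algebraMap 𝕜[X] K (X - C c))⁻¹ ∈ s := by
  obtain ⟨g, hg, hndvd⟩ := u.exists_eq_pow_rootMultiplicity_mul_and_not_dvd hu c
  set μ := u.rootMultiplicity c
  have hne : algebraMap 𝕜[X] K (X - C c) ≠ 0 :=
    (map_ne_zero_iff _ (FaithfulSMul.algebraMap_injective _ _)).mpr (X_sub_C_ne_zero c)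
  refine inv_mem_of_isCoprime hR ((irreducible_X_sub_C c).coprime_iff_not_dvd.mpr hndvd) hne ?_
  convert h using 1
  rw [hg, map_mul, map_pow, pow_succ]
  field_simp

lemma δ1_algebraMap (p : Pc) : δ1 (algebraMap Pc L1 p) = algebraMap Pc L1 (p.comp (X - 1)) :=
  IsFractionRing.algEquivOfAlgEquiv_algebraMap _ _

lemma δ1_algebraMap_X_sub_C (c : ℂ) :
    δ1 (algebraMap Pc L1 (X - C c)) = algebraMap Pc L1 (X - C (c + 1)) := by
  rw [δ1_algebraMap, sub_comp, X_comp, C_comp, C_add, C_1, sub_sub, add_comm]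

lemma δ1_div_x1_mul (f : Pc) (a : L1) :
    δ1 (algebraMap Pc L1 f / x1 * a) =
      algebraMap Pc L1 (f.comp (X - 1)) / algebraMap Pc L1 (X - C 1) * δ1 a := by
  have hx1 : x1 = algebraMap Pc L1 (X - C 0) := by simp [x1]
  rw [map_mul, map_div₀, δ1_algebraMap, hx1, δ1_algebraMap_X_sub_C, zero_add]

lemma comp_X_sub_one_ne_zero {f : Pc} (hf : f ≠ 0) : f.comp (X - 1) ≠ 0 := by
  simpa [sub_eq_add_neg] using comp_X_add_C_ne_zero_iff (t := (-1 : ℂ)).mpr hf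

section

variable {f : Pc}

lemma inv_X_sub_C_one_mem_multipliers (hf : f.eval 0 ≠ 0) :
    (algebraMap Pc L1 (X - C 1))⁻¹ ∈ multipliers f := by
  have hroot : ¬(f.comp (X - 1)).IsRoot 1 := by simpa using hf
  have hf₀ : f ≠ 0 := by rintro rfl; simp at hf
  have hconj := δ1_div_x1_mul_mem_multipliers (one_mem (multipliers f))
  rw [δ1_div_x1_mul, map_one δ1, mul_one] at hconj
  refine inv_X_sub_C_mem_of_div_pow_rootMultiplicity_succ_mem (algebraMap_mem_multipliers f)
    (comp_X_sub_one_ne_zero hf₀) 1 ?_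
  rwa [rootMultiplicity_eq_zero hroot, zero_add, pow_one]

lemma inv_X_sub_C_add_one_mem_multipliers (hf : f ≠ 0) {c : ℂ}
    (hc : (algebraMap Pc L1 (X - C c))⁻¹ ∈ multipliers f) :
    (algebraMap Pc L1 (X - C (c + 1)))⁻¹ ∈ multipliers f := by
  set n := (f.comp (X - 1)).rootMultiplicity (c + 1) + 1
  have hconj := δ1_div_x1_mul_mem_multipliers (pow_mem hc n)
  rw [δ1_div_x1_mul, map_pow, map_inv₀, δ1_algebraMap_X_sub_C] at hconj
  refine inv_X_sub_C_mem_of_div_pow_rootMultiplicity_succ_mem (algebraMap_mem_multipliers f)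
    (comp_X_sub_one_ne_zero hf) (c + 1) ?_
  convert mul_mem (algebraMap_mem_multipliers f (X - C 1)) hconj using 1
  have hne : algebraMap Pc L1 (X - C 1) ≠ 0 :=
    (map_ne_zero_iff _ (IsFractionRing.injective Pc L1)).mpr (X_sub_C_ne_zero 1)
  field_simp
  rw [div_pow, one_pow, mul_one_div]

lemma inv_X_sub_C_natCast_add_one_mem_multipliers (hf : f.eval 0 ≠ 0) (j : ℕ) :
    (algebraMap Pc L1 (X - C ((j : ℂ) + 1)))⁻¹ ∈ multipliers f := by
  have hf₀ : f ≠ 0 := by rintro rfl; simp at hf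
  induction j with
  | zero => simpa using inv_X_sub_C_one_mem_multipliers hf
  | succ j ih => simpa using inv_X_sub_C_add_one_mem_multipliers hf₀ ih

end

/-- for every integer `k ≥ 2`, `m_{1/(x−k)} ∈ U_f`. -/
theorem inv_x_sub_k_mem_Uf (f : Pc) (hf : Polynomial.eval 0 f ≠ 0)
    (k : ℕ) (hk : 2 ≤ k) :
    mul1 (1 / (x1 - (k : L1))) ∈ Uf f := by
  obtain ⟨j, rfl⟩ : ∃ j, k = j + 1 := ⟨k - 1, by omega⟩
  have hx : x1 - ((j + 1 : ℕ) : L1) = algebraMap Pc L1 (X - C ((j : ℂ) + 1)) := by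
    simp [x1]
  rw [one_div, ← mem_multipliers, hx]
  exact inv_X_sub_C_natCast_add_one_mem_multipliers hf j
end
end
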